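/- Let L, B, Π, Π₁ be real N×N matrices with Π, Π₁ symmetric and both satisfying the algebraic Riccati equation 0 = Π L + Lᵀ Π − Π B Bᵀ Π + CᵀC. Suppose both closed-loop matrices X = L − B Bᵀ Π and X₁ = L − B Bᵀ Π₁ are Hurwitz (all eigenvalues have negative real part). Then Π = Π₁. (The proof uses that D = Π − Π₁ satisfies the Sylvester equation D X + X₁ᵀ D = 0, which has only the zero solution when X and −X₁ᵀ have disjoint spectra.) -/

import Mathlib

open Matrix Polynomial

private lemma eval_cp {n : ℕ} {R : Type*} [CommRing R] (A : Matrix (Fin n) (Fin n) R) (z : R) :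
    A.charpoly.eval z = (z • (1 : Matrix (Fin n) (Fin n) R) - A).det := by
  rw [Matrix.charpoly, _root_.eval_det, matPolyEquiv_charmatrix]
  simp [Matrix.smul_one_eq_diagonal]

private lemma comm_pow {n : ℕ} (A B D : Matrix (Fin n) (Fin n) ℂ) (h : D * A = B * D) (k : ℕ) :
    D * A ^ k = B ^ k * D := by
  induction k with
  | zero => simp
  | succ k ih => rw [pow_succ, pow_succ, ← mul_assoc, ih, mul_assoc, h, mul_assoc]

private lemma comm_aeval {n : ℕ} (A B D : Matrix (Fin n) (Fin n) ℂ) (h : D * A = B * D)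
    (q : ℂ[X]) : D * aeval A q = aeval B q * D := by
  induction q using Polynomial.induction_on' with
  | add p q hp hq => rw [map_add, map_add, mul_add, add_mul, hp, hq]
  | monomial k a =>
      simp only [aeval_monomial, Algebra.algebraMap_eq_smul_one, smul_mul_assoc, one_mul,
        mul_smul_comm, comm_pow A B D h]

private lemma spec_iff_root {n : ℕ} (A : Matrix (Fin n) (Fin n) ℂ) (z : ℂ) :
    z ∈ spectrum ℂ A ↔ A.charpoly.IsRoot z := by
  rw [spectrum.mem_iff, Polynomial.IsRoot, eval_cp, Algebra.algebraMap_eq_smul_one]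
  simp [Matrix.isUnit_iff_isUnit_det, isUnit_iff_ne_zero]

private lemma sylvester_zero {n : ℕ} (A B D : Matrix (Fin n) (Fin n) ℂ)
    (h : D * A = B * D)
    (hdisj : ∀ z : ℂ, A.charpoly.IsRoot z → B.charpoly.IsRoot z → False) :
    D = 0 := by
  rcases Nat.eq_zero_or_pos n with hn | hn
  · subst hn; exact Subsingleton.elim _ _
  · have hq := comm_aeval A B D h A.charpoly
    rw [Matrix.aeval_self_charpoly, mul_zero] at hq
    have hdeg : 0 < A.charpoly.degree := by
      rw [Matrix.charpoly_degree_eq_dim]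
      exact_mod_cast (by simpa using hn)
    have hu : IsUnit (Polynomial.aeval B A.charpoly) := by
      rw [← spectrum.zero_notMem_iff ℂ,
        spectrum.map_polynomial_aeval_of_degree_pos B A.charpoly hdeg]
      rintro ⟨μ, hμ, h0⟩
      exact hdisj μ h0 ((spec_iff_root B μ).1 hμ)
    exact (hu.mul_right_eq_zero).1 hq.symm

private lemma root_neg_transpose {n : ℕ} (M : Matrix (Fin n) (Fin n) ℂ) (z : ℂ) :
    (-Mᵀ).charpoly.IsRoot z ↔ M.charpoly.IsRoot (-z) := by
  rw [Polynomial.IsRoot, Polynomial.IsRoot, eval_cp, eval_cp]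
  have key : z • (1 : Matrix (Fin n) (Fin n) ℂ) - (-Mᵀ) = (-((-z) • 1 - M))ᵀ := by
    simp [transpose_smul, neg_sub, add_comm]
  rw [key, det_transpose, det_neg]
  simp [sub_eq_iff_eq_add]


/-- A square real matrix is Hurwitz if every complex root of its characteristic
polynomial has strictly negative real part. -/
def IsHurwitz {N : ℕ} (X : Matrix (Fin N) (Fin N) ℝ) : Prop :=
  ∀ z : ℂ, (Matrix.charpoly (X.map (algebraMap ℝ ℂ))).IsRoot z → z.re < 0

/-- Uniqueness of the stabilizing symmetric solution of the algebraic Riccati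
equation: if `Pi0` and `Pi1` are symmetric solutions of
`0 = Π L + Lᵀ Π − Π B Bᵀ Π + Cᵀ C` whose closed-loop matrices
`L − B Bᵀ Π` are both Hurwitz, then `Pi0 = Pi1`. -/
theorem stmt_11 {N m p : ℕ} (L : Matrix (Fin N) (Fin N) ℝ)
    (B : Matrix (Fin N) (Fin m) ℝ) (C : Matrix (Fin p) (Fin N) ℝ)
    (Pi0 Pi1 : Matrix (Fin N) (Fin N) ℝ)
    (hsym0 : Pi0.IsSymm) (hsym1 : Pi1.IsSymm)
    (hric0 : 0 = Pi0 * L + Lᵀ * Pi0 - Pi0 * B * Bᵀ * Pi0 + Cᵀ * C)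
    (hric1 : 0 = Pi1 * L + Lᵀ * Pi1 - Pi1 * B * Bᵀ * Pi1 + Cᵀ * C)
    (hH0 : IsHurwitz (L - B * Bᵀ * Pi0))
    (hH1 : IsHurwitz (L - B * Bᵀ * Pi1)) :
    Pi0 = Pi1 := by
  set D : Matrix (Fin N) (Fin N) ℝ := Pi0 - Pi1 with hDdef
  set X : Matrix (Fin N) (Fin N) ℝ := L - B * Bᵀ * Pi0 with hXdef
  set X1 : Matrix (Fin N) (Fin N) ℝ := L - B * Bᵀ * Pi1 with hX1def
  have ht : X1ᵀ = Lᵀ - Pi1 * B * Bᵀ := by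
    rw [hX1def]
    rw [transpose_sub, transpose_mul, transpose_mul, transpose_transpose, hsym1.eq,
      Matrix.mul_assoc]
  have e : (Pi0 * L + Lᵀ * Pi0 - Pi0 * B * Bᵀ * Pi0)
      - (Pi1 * L + Lᵀ * Pi1 - Pi1 * B * Bᵀ * Pi1) = 0 := by
    rw [eq_neg_of_add_eq_zero_left hric0.symm, eq_neg_of_add_eq_zero_left hric1.symm, sub_self]
  rw [Matrix.mul_assoc Pi0 B Bᵀ, Matrix.mul_assoc Pi1 B Bᵀ] at e
  have ht' : X1ᵀ = Lᵀ - Pi1 * (B * Bᵀ) := by rw [ht, Matrix.mul_assoc Pi1 B Bᵀ]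
  have key : D * X + X1ᵀ * D = 0 := by
    rw [ht', hDdef, hXdef]
    have expand : (Pi0 - Pi1) * (L - B * Bᵀ * Pi0) + (Lᵀ - Pi1 * (B * Bᵀ)) * (Pi0 - Pi1)
        = (Pi0 * L + Lᵀ * Pi0 - Pi0 * (B * Bᵀ) * Pi0)
          - (Pi1 * L + Lᵀ * Pi1 - Pi1 * (B * Bᵀ) * Pi1) := by
      noncomm_ring
    rw [expand, e]
  set g : ℝ →+* ℂ := algebraMap ℝ ℂ with hg
  have keyC : D.map g * X.map g + (X1.map g)ᵀ * D.map g = 0 := by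
    rw [← Matrix.map_mul, ← Matrix.transpose_map, ← Matrix.map_mul, ← Matrix.map_add g (fun a b => map_add g a b), key,
      Matrix.map_zero _ g.map_zero]
  have h : D.map g * X.map g = (-(X1.map g)ᵀ) * D.map g := by
    rw [neg_mul]
    exact eq_neg_of_add_eq_zero_left keyC
  have hdisj : ∀ z : ℂ, (X.map g).charpoly.IsRoot z →
      (-(X1.map g)ᵀ).charpoly.IsRoot z → False := by
    intro z h1 h2
    have r1 : z.re < 0 := hH0 z h1
    have r2 : (-z).re < 0 := hH1 (-z) ((root_neg_transpose _ z).1 h2)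
    rw [Complex.neg_re] at r2
    linarith
  have hD : D.map g = 0 := sylvester_zero _ _ _ h hdisj
  have hD0 : D = 0 := by
    ext i j
    have h0 := congrFun (congrFun hD i) j
    simpa [Matrix.map_apply, hg] using h0
  rw [hDdef] at hD0
  exact sub_eq_zero.1 hD0
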